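/- For every real λ ≠ 0, the function g(x) = x · ln( (1 − e^{(1/x + 1)λ}) / (1 − e^{λ}) ) is concave on (0, 1]. -/

import Mathlib

/-!
Write `g x = x * φ (1 / x)` with `φ t = log (1 - exp ((t + 1) λ)) - log (1 - exp λ)`. Then `g` is
the perspective of `φ`, so it suffices that `φ` is concave on `t > -1`. For `λ < 0` this holds
because `1 - exp u` is a positive concave function of the affine function `u = (t + 1) λ < 0`,
and `log` of a positive concave function is concave. For `λ > 0` the identity
`log (1 - e^u) = u + log (1 - e^(-u))` (both sides read as `log |⋯|`) reduces it to the first case.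
-/

open Set Real

theorem Real.one_sub_exp_ne_zero {x : ℝ} (hx : x ≠ 0) : 1 - exp x ≠ 0 :=
  sub_ne_zero.2 (Ne.symm ((exp_eq_one_iff x).not.2 hx))

theorem Real.log_one_sub_exp (x : ℝ) : log (1 - exp x) = x + log (1 - exp (-x)) := by
  rcases eq_or_ne x 0 with rfl | hx
  · simp
  have h_factor : 1 - exp x = -(exp x * (1 - exp (-x))) := by
    rw [mul_sub, ← exp_add, add_neg_cancel, exp_zero]
    ring
  rw [h_factor, log_neg_eq_log, log_mul (exp_ne_zero x) (one_sub_exp_ne_zero (neg_ne_zero.2 hx)),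
    log_exp]

section

variable {E : Type*} [AddCommGroup E] [Module ℝ E] {s : Set E}

theorem ConvexOn.exp {f : E → ℝ} (hf : ConvexOn ℝ s f) : ConvexOn ℝ s fun x => exp (f x) :=
  ⟨hf.1, fun _ hx _ hy _ _ ha hb hab =>
    (exp_le_exp.2 (hf.2 hx hy ha hb hab)).trans
      (convexOn_exp.2 (mem_univ _) (mem_univ _) ha hb hab)⟩

theorem ConcaveOn.log {f : E → ℝ} (hf : ConcaveOn ℝ s f) (hf_pos : ∀ x ∈ s, 0 < f x) :
    ConcaveOn ℝ s fun x => log (f x) :=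
  ⟨hf.1, fun x hx y hy _ _ ha hb hab =>
    (strictConcaveOn_log_Ioi.concaveOn.2 (hf_pos x hx) (hf_pos y hy) ha hb hab).trans
      (log_le_log (convex_Ioi (0 : ℝ) (hf_pos x hx) (hf_pos y hy) ha hb hab)
        (hf.2 hx hy ha hb hab))⟩

theorem concaveOn_log_one_sub_exp_of_neg {u : E → ℝ} (hu : ConvexOn ℝ s u)
    (hu_neg : ∀ x ∈ s, u x < 0) : ConcaveOn ℝ s fun x => log (1 - exp (u x)) := by
  refine ((hu.exp.neg.add_const 1).congr fun x _ => ?_).log fun x hx => ?_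
  · simp only [Pi.add_apply, Pi.neg_apply]
    ring
  · simpa using hu_neg x hx

theorem concaveOn_log_one_sub_exp_of_pos {u : E → ℝ} (hu : ConcaveOn ℝ s u)
    (hu_pos : ∀ x ∈ s, 0 < u x) : ConcaveOn ℝ s fun x => log (1 - exp (u x)) :=
  (hu.add (concaveOn_log_one_sub_exp_of_neg hu.neg fun x hx => neg_neg_of_pos (hu_pos x hx))).congr
    fun x _ => (log_one_sub_exp (u x)).symm

end

theorem concaveOn_log_one_sub_exp_add_one_mul {c : ℝ} (hc : c ≠ 0) :
    ConcaveOn ℝ (Ioi (-1)) fun t => log (1 - exp ((t + 1) * c)) := by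
  have h_affine : ∀ a b x y : ℝ, a + b = 1 →
      (a * x + b * y + 1) * c = a * ((x + 1) * c) + b * ((y + 1) * c) := fun a b x y hab => by
    linear_combination c * hab.symm
  have h_pos : ∀ t ∈ Ioi (-1 : ℝ), 0 < t + 1 := fun t ht => neg_lt_iff_pos_add.1 ht
  rcases hc.lt_or_gt with hc | hc
  · exact concaveOn_log_one_sub_exp_of_neg
      ⟨convex_Ioi _, fun x _ y _ a b _ _ hab => (h_affine a b x y hab).le⟩
      fun t ht => mul_neg_of_pos_of_neg (h_pos t ht) hc
  · exact concaveOn_log_one_sub_exp_of_pos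
      ⟨convex_Ioi _, fun x _ y _ a b _ _ hab => (h_affine a b x y hab).ge⟩
      fun t ht => mul_pos (h_pos t ht) hc

theorem ConcaveOn.perspective {s : Set ℝ} {φ : ℝ → ℝ} (hφ : ConcaveOn ℝ s φ) :
    ConcaveOn ℝ {x | 0 < x ∧ x⁻¹ ∈ s} fun x => x * φ x⁻¹ := by
  -- `(a x + b y)⁻¹` is the convex combination of `x⁻¹, y⁻¹` with weights `a x / z, b y / z`
  have h_combo : ∀ ⦃x y a b z : ℝ⦄, 0 < x → 0 < y → 0 ≤ a → 0 ≤ b → a + b = 1 →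
      z = a * x + b * y → 0 < z ∧ 0 ≤ a * x / z ∧ 0 ≤ b * y / z ∧ a * x / z + b * y / z = 1 ∧
        a * x / z * x⁻¹ + b * y / z * y⁻¹ = z⁻¹ := by
    rintro x y a b z hx hy ha hb hab rfl
    have hz : 0 < a * x + b * y := convex_Ioi (0 : ℝ) hx hy ha hb hab
    refine ⟨hz, by positivity, by positivity, by field_simp, ?_⟩
    field_simp
    exact hab
  refine ⟨fun x hx y hy a b ha hb hab => ?_, fun x hx y hy a b ha hb hab => ?_⟩
  · obtain ⟨hz, hax, hby, hsum, hinv⟩ := h_combo hx.1 hy.1 ha hb hab rfl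
    exact ⟨hz, hinv ▸ hφ.1 hx.2 hy.2 hax hby hsum⟩
  · obtain ⟨hz, hax, hby, hsum, hinv⟩ := h_combo hx.1 hy.1 ha hb hab rfl
    have key := hφ.2 hx.2 hy.2 hax hby hsum
    simp only [smul_eq_mul] at key ⊢
    rw [hinv] at key
    calc a * (x * φ x⁻¹) + b * (y * φ y⁻¹)
        = (a * x + b * y) *
            (a * x / (a * x + b * y) * φ x⁻¹ + b * y / (a * x + b * y) * φ y⁻¹) := by
          field_simp
      _ ≤ (a * x + b * y) * φ (a * x + b * y)⁻¹ := mul_le_mul_of_nonneg_left key hz.le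

/-- For every real `λ ≠ 0`, the function
`g(x) = x · ln((1 − e^{(1/x + 1)λ}) / (1 − e^{λ}))` is concave on `(0, 1]`. -/
theorem g_concave_on_Ioc (lam : ℝ) (hlam : lam ≠ 0) :
    ConcaveOn ℝ (Set.Ioc (0 : ℝ) 1)
      (fun x : ℝ =>
        x * Real.log ((1 - Real.exp ((1 / x + 1) * lam)) / (1 - Real.exp lam))) := by
  have hφ := ((concaveOn_log_one_sub_exp_add_one_mul hlam).add_const
    (-log (1 - exp lam))).perspective
  refine (hφ.subset (fun x hx => ⟨hx.1, ?_⟩) (convex_Ioc 0 1)).congr fun x hx => ?_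
  · exact (neg_one_lt_zero.trans (inv_pos.2 hx.1) :)
  · have hx₁ : 0 < 1 / x + 1 := by linarith [one_div_pos.2 hx.1]
    simp only [one_div, Pi.add_apply] at hx₁ ⊢
    rw [log_div (one_sub_exp_ne_zero (mul_ne_zero hx₁.ne' hlam)) (one_sub_exp_ne_zero hlam)]
    ring
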